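/- Fix w ∈ ℝ^p, b ∈ ℝ, training samples (x_n, y_n) ∈ ℝ^p × {−1, +1} for n = 1, …, N, and constants A > 0, C_a ≥ 0, C > 0. Let U₀ = {δ ∈ ℝ^p : ‖δ‖₂² ≤ C} and U⁻ = ⋃_{t=1}^N {(δ₁, …, δ_N) : δ_t ∈ U₀ and δ_i = 0 for all i ≠ t}. Assume there exists t ∈ {1, …, N} with y_t(wᵀx_t + b) < 0. Then A Σ_{n=1}^N [1 − y_n(wᵀx_n + b)]₊ + sup over δ ∈ U₀ of [ A wᵀδ − C_a ‖δ‖₀ ] is less than or equal to sup over (δ₁, …, δ_N) ∈ U⁻ of [ A Σ_{n=1}^N [1 − y_n(wᵀ(x_n − δ_n) + b)]₊ − C_a Σ_{n=1}^N ‖δ_n‖₀ ]. -/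

import Mathlib

/-!
Given `δ ∈ U₀`, attack only a misclassified sample `t`, by `y_t δ`. Since
`y_t (wᵀx_t + b) < 0`, the hinge term of `t` is positive, so it sits on the linear branch of
`[·]₊` and grows by exactly `y_t² wᵀδ = wᵀδ`; the other terms are untouched and
`‖y_t δ‖₀ = ‖δ‖₀`. Hence every value on the left is attained or exceeded on the right, and the
right-hand supremum is finite by Cauchy–Schwarz.
-/

open Finset

/-- `[z]₊` -/
noncomputable def hinge (z : ℝ) : ℝ := max z 0

/-- `‖δ‖₀` -/
noncomputable def l0 {p : ℕ} (δ : Fin p → ℝ) : ℝ :=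
  ((Finset.univ.filter (fun i => δ i ≠ 0)).card : ℝ)

/-- `U₀` -/
def atomicSet (p : ℕ) (C : ℝ) : Set (Fin p → ℝ) :=
  {δ | ∑ i, (δ i) ^ 2 ≤ C}

/-- `U⁻` -/
def Uminus (p N : ℕ) (C : ℝ) : Set (Fin N → Fin p → ℝ) :=
  {d | ∃ t : Fin N, d t ∈ atomicSet p C ∧ ∀ i : Fin N, i ≠ t → d i = 0}

lemma hinge_of_nonneg {z : ℝ} (hz : 0 ≤ z) : hinge z = z := max_eq_left hz

lemma hinge_add_le (z a : ℝ) : hinge (z + a) ≤ hinge z + |a| :=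
  max_le (add_le_add (le_max_left _ _) (le_abs_self a))
    (add_nonneg (le_max_right _ _) (abs_nonneg a))

lemma l0_nonneg {p : ℕ} (δ : Fin p → ℝ) : 0 ≤ l0 δ := Nat.cast_nonneg _

lemma l0_zero {p : ℕ} : l0 (0 : Fin p → ℝ) = 0 := by simp [l0]

lemma l0_smul {p : ℕ} {c : ℝ} (hc : c ≠ 0) (δ : Fin p → ℝ) : l0 (c • δ) = l0 δ := by
  simp [l0, hc]

lemma sum_l0_single {p N : ℕ} (t : Fin N) (v : Fin p → ℝ) :
    ∑ n, l0 ((Pi.single t v : Fin N → Fin p → ℝ) n) = l0 v := by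
  rw [Fintype.sum_eq_single t fun n hn => by rw [Pi.single_eq_of_ne hn, l0_zero],
    Pi.single_eq_same]

lemma smul_mem_atomicSet {p : ℕ} {C c : ℝ} (hc : c ^ 2 ≤ 1) {δ : Fin p → ℝ}
    (hδ : δ ∈ atomicSet p C) : c • δ ∈ atomicSet p C := by
  have hδ' : ∑ i, δ i ^ 2 ≤ C := hδ
  calc ∑ i, (c * δ i) ^ 2 = c ^ 2 * ∑ i, δ i ^ 2 := by simp only [mul_pow, mul_sum]
    _ ≤ 1 * ∑ i, δ i ^ 2 := by gcongr
    _ ≤ C := by rwa [one_mul]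

lemma abs_sum_mul_le_of_mem_atomicSet {p : ℕ} {C : ℝ} (w : Fin p → ℝ) {δ : Fin p → ℝ}
    (hδ : δ ∈ atomicSet p C) : |∑ i, w i * δ i| ≤ √((∑ i, w i ^ 2) * C) :=
  Real.abs_le_sqrt <| (sum_mul_sq_le_sq_mul_sq _ _ _).trans <|
    mul_le_mul_of_nonneg_left hδ (sum_nonneg fun _ _ => sq_nonneg _)

lemma single_mem_Uminus {p N : ℕ} {C : ℝ} (t : Fin N) {v : Fin p → ℝ}
    (hv : v ∈ atomicSet p C) : (Pi.single t v : Fin N → Fin p → ℝ) ∈ Uminus p N C :=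
  ⟨t, by rwa [Pi.single_eq_same], fun _ hn => Pi.single_eq_of_ne hn _⟩

lemma apply_mem_atomicSet_of_mem_Uminus {p N : ℕ} {C : ℝ} (hC : 0 ≤ C)
    {d : Fin N → Fin p → ℝ} (hd : d ∈ Uminus p N C) (n : Fin N) : d n ∈ atomicSet p C := by
  obtain ⟨t, ht, hzero⟩ := hd
  obtain rfl | hn := eq_or_ne n t
  · exact ht
  · simpa [hzero n hn, atomicSet] using hC

lemma sum_add_le_sum_of_eq_of_ne {ι M : Type*} [Fintype ι] [DecidableEq ι] [AddCommMonoid M]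
    [PartialOrder M] [IsOrderedAddMonoid M] {f g : ι → M} {c : M} (t : ι)
    (ht : f t + c ≤ g t) (hne : ∀ n ≠ t, f n = g n) : ∑ n, f n + c ≤ ∑ n, g n := by
  rw [← add_sum_erase _ f (mem_univ t), ← add_sum_erase _ g (mem_univ t), add_right_comm,
    sum_congr rfl fun n hn => hne n (ne_of_mem_erase hn)]
  exact add_le_add_left ht _

lemma one_sub_mul_sum_sub_add {ι : Type*} [Fintype ι] (w u v : ι → ℝ) (y b : ℝ) :
    1 - y * ((∑ i, w i * (u i - v i)) + b)
      = 1 - y * ((∑ i, w i * u i) + b) + y * ∑ i, w i * v i := by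
  simp only [mul_sub, sum_sub_distrib]
  ring

section Attack

variable {p N : ℕ} (w : Fin p → ℝ) (b : ℝ) (x : Fin N → Fin p → ℝ) (y : Fin N → ℝ)
  (A Ca : ℝ)

noncomputable def attackObjective (d : Fin N → Fin p → ℝ) : ℝ :=
  A * ∑ n, hinge (1 - y n * ((∑ i, w i * (x n i - d n i)) + b)) - Ca * ∑ n, l0 (d n)

lemma bddAbove_attackObjective_image {C : ℝ} (hA : 0 ≤ A) (hCa : 0 ≤ Ca) (hC : 0 ≤ C) :
    BddAbove (attackObjective w b x y A Ca '' Uminus p N C) := by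
  refine ⟨A * ∑ n, (hinge (1 - y n * ((∑ i, w i * x n i) + b))
    + |y n| * √((∑ i, w i ^ 2) * C)), ?_⟩
  rintro _ ⟨d, hd, rfl⟩
  have hterm : ∀ n, hinge (1 - y n * ((∑ i, w i * (x n i - d n i)) + b))
      ≤ hinge (1 - y n * ((∑ i, w i * x n i) + b)) + |y n| * √((∑ i, w i ^ 2) * C) := by
    intro n
    rw [one_sub_mul_sum_sub_add]
    refine (hinge_add_le _ _).trans (add_le_add_right ?_ _)
    rw [abs_mul]
    exact mul_le_mul_of_nonneg_left
      (abs_sum_mul_le_of_mem_atomicSet w (apply_mem_atomicSet_of_mem_Uminus hC hd n))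
      (abs_nonneg _)
  have hl0 : 0 ≤ Ca * ∑ n, l0 (d n) := mul_nonneg hCa (sum_nonneg fun n _ => l0_nonneg _)
  have := mul_le_mul_of_nonneg_left (sum_le_sum (s := univ) fun n _ => hterm n) hA
  unfold attackObjective
  linarith

lemma add_le_attackObjective_single {t : Fin N} (hyt : y t ^ 2 = 1)
    (ht : y t * ((∑ i, w i * x t i) + b) < 0) (hA : 0 ≤ A) (δ : Fin p → ℝ) :
    A * ∑ n, hinge (1 - y n * ((∑ i, w i * x n i) + b)) + (A * ∑ i, w i * δ i - Ca * l0 δ)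
      ≤ attackObjective w b x y A Ca (Pi.single t (y t • δ)) := by
  set d : Fin N → Fin p → ℝ := Pi.single t (y t • δ) with hd
  have hl0 : ∑ n, l0 (d n) = l0 δ := by
    rw [hd, sum_l0_single, l0_smul (by rintro h; simp [h] at hyt)]
  have hsum : ∑ n, hinge (1 - y n * ((∑ i, w i * x n i) + b)) + ∑ i, w i * δ i
      ≤ ∑ n, hinge (1 - y n * ((∑ i, w i * (x n i - d n i)) + b)) := by
    refine sum_add_le_sum_of_eq_of_ne t ?_ fun n hn => by simp [hd, Pi.single_eq_of_ne hn]
    have hgain : y t * ∑ i, w i * (y t • δ) i = ∑ i, w i * δ i := by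
      simp only [Pi.smul_apply, smul_eq_mul, mul_sum]
      exact sum_congr rfl fun i _ => by linear_combination (w i * δ i) * hyt
    rw [hd, Pi.single_eq_same, one_sub_mul_sum_sub_add, hgain, hinge_of_nonneg (by linarith)]
    exact le_max_left _ _
  have := mul_le_mul_of_nonneg_left hsum hA
  rw [attackObjective, hl0]
  linarith

end Attack

/-- lower bound, Inequality (26) of Appendix A: attacking a single
misclassified sample suffices. -/
theorem robust_hinge_lower_bound {p N : ℕ}
    (w : Fin p → ℝ) (b : ℝ)
    (x : Fin N → Fin p → ℝ) (y : Fin N → ℝ)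
    (hy : ∀ n, y n = 1 ∨ y n = -1)
    (A Ca C : ℝ) (hA : 0 < A) (hCa : 0 ≤ Ca) (hC : 0 < C)
    (hsep : ∃ t : Fin N, y t * ((∑ i, w i * x t i) + b) < 0) :
    A * ∑ n, hinge (1 - y n * ((∑ i, w i * x n i) + b))
      + sSup ((fun δ : Fin p → ℝ =>
          A * (∑ i, w i * δ i) - Ca * l0 δ) '' atomicSet p C)
      ≤
    sSup ((fun d : Fin N → Fin p → ℝ =>
        A * ∑ n, hinge (1 - y n * ((∑ i, w i * (x n i - d n i)) + b))
          - Ca * ∑ n, l0 (d n)) '' Uminus p N C) := by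
  obtain ⟨t, ht⟩ := hsep
  have hyt : y t ^ 2 = 1 := by rcases hy t with h | h <;> simp [h]
  have hbdd := bddAbove_attackObjective_image w b x y A Ca hA.le hCa hC.le
  refine add_le_of_le_sub_left (csSup_le ⟨_, 0, by simpa [atomicSet] using hC.le, rfl⟩ ?_)
  rintro _ ⟨δ, hδ, rfl⟩
  exact le_sub_iff_add_le'.2 <| (add_le_attackObjective_single w b x y A Ca hyt ht hA.le δ).trans <|
    le_csSup hbdd ⟨_, single_mem_Uminus t (smul_mem_atomicSet hyt.le hδ), rfl⟩
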